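/- One has b_t → y as t ↑ T; consequently b extends to a continuous function on [0,T] with terminal value b_T = y. -/

import Mathlib

open MeasureTheory

/-
Since `∫₀ᵗ (T - s)⁻² ds = (T - t)⁻¹ - T⁻¹`, the term `(T - t) ∫₀ᵗ (T - s)⁻² B_s ds` is an average of
`B` against weights of total mass `t / T → 1` that concentrate at `s = T`; hence it tends to `B_T`
and cancels `B_t` in the limit, leaving `(t/T) y + ((T - t)/T) q → y`. Redefining `b` at `T` as `y`
then gives the continuous extension.
-/

/-- The (pathwise) Brownian-bridge path from `q` to `y` in time `T`, driven by `B`: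
`b_t = (t/T)y + ((T−t)/T)q + B_t − (T−t)∫₀ᵗ (T−s)⁻² B_s ds`. -/
noncomputable def bridgePath (ν : ℕ) (T : ℝ) (q y : Fin ν → ℝ)
    (B : ℝ → Fin ν → ℝ) (t : ℝ) : Fin ν → ℝ :=
  (t / T) • y + ((T - t) / T) • q + B t -
    (T - t) • ∫ s in (0 : ℝ)..t, ((T - s) ^ 2)⁻¹ • B s

open Set Filter Topology

theorem ContinuousOn.intervalIntegrable_of_ordConnected {E : Type*} [NormedAddCommGroup E]
    {f : ℝ → E} {s : Set ℝ} [s.OrdConnected] (hf : ContinuousOn f s) {x y : ℝ} (hx : x ∈ s)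
    (hy : y ∈ s) : IntervalIntegrable f volume x y :=
  (hf.mono (OrdConnected.uIcc_subset ‹_› hx hy)).intervalIntegrable

theorem continuousOn_primitive_Ico_of_continuousOn {E : Type*} [NormedAddCommGroup E]
    [NormedSpace ℝ E] {f : ℝ → E} {a b : ℝ} (hf : ContinuousOn f (Ico a b)) :
    ContinuousOn (fun t => ∫ s in a..t, f s) (Ico a b) := by
  intro t ht
  obtain ⟨t', htt', ht'b⟩ := exists_between ht.2
  have hat' : a ≤ t' := ht.1.trans htt'.le
  have hint : IntervalIntegrable f volume (min a a) (max a t') := by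
    simpa [hat'] using hf.intervalIntegrable_of_ordConnected ⟨le_rfl, ht.1.trans_lt ht.2⟩
      ⟨hat', ht'b⟩
  refine (continuousWithinAt_inter (Iic_mem_nhds htt')).1 ?_
  exact (intervalIntegral.continuousWithinAt_primitive (measure_singleton t) hint).mono
    fun s hs => ⟨hs.1.1, hs.2⟩

section BridgeKernel

variable {E : Type*} [NormedAddCommGroup E] [NormedSpace ℝ E] {T a t : ℝ}

theorem continuousOn_inv_sub_sq (T : ℝ) : ContinuousOn (fun s : ℝ => ((T - s) ^ 2)⁻¹) (Iio T) :=
  (continuousOn_const.sub continuousOn_id).pow 2 |>.inv₀ fun _ hs =>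
    pow_ne_zero 2 (sub_ne_zero.2 (ne_of_gt hs))

theorem integral_inv_sub_sq (ha : a < T) (ht : t < T) :
    ∫ s in a..t, ((T - s) ^ 2)⁻¹ = (T - t)⁻¹ - (T - a)⁻¹ := by
  have hsub : uIcc a t ⊆ Iio T := ordConnected_Iio.uIcc_subset ha ht
  refine intervalIntegral.integral_eq_sub_of_hasDerivAt (f := fun u => (T - u)⁻¹) (fun s hs => ?_)
    ((continuousOn_inv_sub_sq T).mono hsub).intervalIntegrable
  have hs : T - s ≠ 0 := sub_ne_zero.2 (ne_of_gt (hsub hs))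
  exact (((hasDerivAt_id s).const_sub T).inv hs).congr_deriv (by simp)

theorem norm_sub_smul_integral_inv_sq_smul_le {g : ℝ → E} {t₀ ε : ℝ} (hε : 0 ≤ ε)
    (ht₀ : t₀ ≤ t) (ht : t < T) (hg : ∀ s ∈ Ioc t₀ t, ‖g s‖ ≤ ε) :
    ‖(T - t) • ∫ s in t₀..t, ((T - s) ^ 2)⁻¹ • g s‖ ≤ ε := by
  have hTt : 0 < T - t := sub_pos.2 ht
  have hkernel : IntervalIntegrable (fun s => ((T - s) ^ 2)⁻¹) volume t₀ t :=
    ((continuousOn_inv_sub_sq T).mono (ordConnected_Iio.uIcc_subset (ht₀.trans_lt ht) ht)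
      ).intervalIntegrable
  have hint : ‖∫ s in t₀..t, ((T - s) ^ 2)⁻¹ • g s‖ ≤ ε * ((T - t)⁻¹ - (T - t₀)⁻¹) := by
    rw [← integral_inv_sub_sq (ht₀.trans_lt ht) ht, ← intervalIntegral.integral_const_mul]
    refine intervalIntegral.norm_integral_le_of_norm_le ht₀ (ae_of_all _ fun s hs => ?_)
      (hkernel.const_mul ε)
    rw [norm_smul_of_nonneg (by positivity), mul_comm]
    exact mul_le_mul_of_nonneg_right (hg s hs) (by positivity)
  have hTt₀ : 0 < (T - t₀)⁻¹ := inv_pos.2 (by linarith)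
  calc ‖(T - t) • ∫ s in t₀..t, ((T - s) ^ 2)⁻¹ • g s‖
      ≤ (T - t) * (ε * ((T - t)⁻¹ - (T - t₀)⁻¹)) := by
        rw [norm_smul, Real.norm_of_nonneg hTt.le]
        gcongr
    _ ≤ (T - t) * (ε * (T - t)⁻¹) := by gcongr; linarith
    _ = ε := by field_simp

theorem tendsto_sub_smul_integral_inv_sq_smul_zero {g : ℝ → E} (ha : a < T)
    (hg : ContinuousOn g (Ico a T)) (hlim : Tendsto g (𝓝[<] T) (𝓝 0)) :
    Tendsto (fun t => (T - t) • ∫ s in a..t, ((T - s) ^ 2)⁻¹ • g s) (𝓝[<] T) (𝓝 0) := by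
  have hk : ContinuousOn (fun s => ((T - s) ^ 2)⁻¹ • g s) (Ico a T) :=
    ((continuousOn_inv_sub_sq T).mono fun s hs => hs.2).smul hg
  rw [Metric.tendsto_nhds]
  intro ε hε
  have hnear : ∀ᶠ s in 𝓝[<] T, ‖g s‖ < ε / 2 := by
    simpa using (Metric.tendsto_nhds.1 hlim) (ε / 2) (half_pos hε)
  obtain ⟨t₀, ht₀, hsmall⟩ := (mem_nhdsLT_iff_exists_mem_Ico_Ioo_subset ha).1 hnear
  have hhead : Tendsto (fun t => (T - t) • ∫ s in a..t₀, ((T - s) ^ 2)⁻¹ • g s)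
      (𝓝[<] T) (𝓝 0) := by
    have : Tendsto (fun t : ℝ => T - t) (𝓝[<] T) (𝓝 0) := tendsto_nhdsWithin_of_tendsto_nhds
      ((continuous_const.sub continuous_id).tendsto' T 0 (sub_self T))
    simpa using this.smul_const (∫ s in a..t₀, ((T - s) ^ 2)⁻¹ • g s)
  filter_upwards [Ioo_mem_nhdsLT ht₀.2, Metric.tendsto_nhds.1 hhead (ε / 2) (half_pos hε)]
    with t ht hhead_small
  have ht' : t ∈ Ico a T := ⟨ht₀.1.trans ht.1.le, ht.2⟩
  rw [dist_zero_right] at hhead_small ⊢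
  rw [← intervalIntegral.integral_add_adjacent_intervals
    (hk.intervalIntegrable_of_ordConnected ⟨le_rfl, ha⟩ ht₀)
    (hk.intervalIntegrable_of_ordConnected ht₀ ht'), smul_add]
  calc _ ≤ _ := norm_add_le _ _
    _ < ε / 2 + ε / 2 := add_lt_add_of_lt_of_le hhead_small
        (norm_sub_smul_integral_inv_sq_smul_le (half_pos hε).le ht.1.le ht.2
          fun s hs => (hsmall ⟨hs.1, hs.2.trans_lt ht.2⟩).le)
    _ = ε := add_halves ε

theorem tendsto_sub_smul_integral_inv_sq_smul [CompleteSpace E] {f : ℝ → E} {L : E}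
    (ha : a < T) (hf : ContinuousOn f (Ico a T)) (hlim : Tendsto f (𝓝[<] T) (𝓝 L)) :
    Tendsto (fun t => (T - t) • ∫ s in a..t, ((T - s) ^ 2)⁻¹ • f s) (𝓝[<] T) (𝓝 L) := by
  have hvanish := tendsto_sub_smul_integral_inv_sq_smul_zero (g := fun s => f s - L) ha
    (hf.sub continuousOn_const) (by simpa using hlim.sub_const L)
  have hmass : Tendsto (fun t => (1 - (T - t) / (T - a)) • L) (𝓝[<] T) (𝓝 L) := by
    have : Continuous fun t => (1 - (T - t) / (T - a)) • L := by fun_prop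
    simpa using tendsto_nhdsWithin_of_tendsto_nhds (this.tendsto T)
  refine (by simpa using hvanish.add hmass : Tendsto _ _ (𝓝 L)).congr' ?_
  filter_upwards [Ico_mem_nhdsLT ha] with t ht
  have hk : ContinuousOn (fun s => ((T - s) ^ 2)⁻¹) (Ico a T) :=
    (continuousOn_inv_sub_sq T).mono fun s hs => hs.2
  have hkf : IntervalIntegrable (fun s => ((T - s) ^ 2)⁻¹ • f s) volume a t :=
    (hk.smul hf).intervalIntegrable_of_ordConnected ⟨le_rfl, ha⟩ ht
  have hkL : IntervalIntegrable (fun s => ((T - s) ^ 2)⁻¹ • L) volume a t :=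
    (hk.smul continuousOn_const).intervalIntegrable_of_ordConnected ⟨le_rfl, ha⟩ ht
  have hscal : (T - t) * ((T - t)⁻¹ - (T - a)⁻¹) = 1 - (T - t) / (T - a) := by
    have : T - t ≠ 0 := sub_ne_zero.2 ht.2.ne'
    field_simp
  simp_rw [smul_sub]
  rw [intervalIntegral.integral_sub hkf hkL, intervalIntegral.integral_smul_const,
    integral_inv_sub_sq ha ht.2, smul_sub, smul_smul, hscal]
  abel

end BridgeKernel

theorem tendsto_bridgePath {ν : ℕ} {T : ℝ} (hT : 0 < T) (q y : Fin ν → ℝ) {B : ℝ → Fin ν → ℝ}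
    (hB : ContinuousOn B (Icc 0 T)) :
    Tendsto (bridgePath ν T q y B) (𝓝[<] T) (𝓝 y) := by
  have hBT : Tendsto B (𝓝[<] T) (𝓝 (B T)) :=
    ((hB T ⟨hT.le, le_rfl⟩).mono_of_mem_nhdsWithin (Icc_mem_nhdsLT hT)).tendsto
  have hdrift := tendsto_sub_smul_integral_inv_sq_smul hT (hB.mono Ico_subset_Icc_self) hBT
  have hlin : Tendsto (fun t => (t / T) • y + ((T - t) / T) • q) (𝓝[<] T) (𝓝 y) := by
    have : Continuous fun t => (t / T) • y + ((T - t) / T) • q := by fun_prop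
    simpa [hT.ne'] using tendsto_nhdsWithin_of_tendsto_nhds (this.tendsto T)
  have := (hlin.add hBT).sub hdrift
  rwa [add_sub_cancel_right] at this

theorem continuousOn_bridgePath {ν : ℕ} {T : ℝ} (q y : Fin ν → ℝ) {B : ℝ → Fin ν → ℝ}
    (hB : ContinuousOn B (Ico 0 T)) : ContinuousOn (bridgePath ν T q y B) (Ico 0 T) := by
  have hprim := continuousOn_primitive_Ico_of_continuousOn
    (((continuousOn_inv_sub_sq T).mono fun s hs => hs.2).smul hB)
  unfold bridgePath
  fun_prop

/-- `b_t → y` as `t ↑ T`; consequently `b` extends to a continuous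
function on `[0,T]` with terminal value `y`. -/
theorem statement5 (ν : ℕ) (T : ℝ) (hT : 0 < T) (q y : Fin ν → ℝ)
    (B : ℝ → Fin ν → ℝ) (hB : ContinuousOn B (Set.Icc 0 T)) :
    Filter.Tendsto (bridgePath ν T q y B) (nhdsWithin T (Set.Ico 0 T)) (nhds y) ∧
    ∃ c : ℝ → Fin ν → ℝ, ContinuousOn c (Set.Icc 0 T) ∧
      (∀ t ∈ Set.Ico (0 : ℝ) T, c t = bridgePath ν T q y B t) ∧ c T = y := by
  classical
  have hlim : Tendsto (bridgePath ν T q y B) (𝓝[Ico 0 T] T) (𝓝 y) :=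
    (tendsto_bridgePath hT q y hB).mono_left (nhdsWithin_mono T Ico_subset_Iio_self)
  refine ⟨hlim, Function.update (bridgePath ν T q y B) T y, ?_,
    fun t ht => Function.update_of_ne ht.2.ne _ _, Function.update_self ..⟩
  rw [continuousOn_update_iff, Icc_sdiff_right]
  exact ⟨continuousOn_bridgePath q y (hB.mono Ico_subset_Icc_self), fun _ => hlim⟩
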